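/- Let T>0, λ₁>0, x₀∈ℝ, and let w:ℝ→ℝ be C¹ with w' bounded on ℝ. Set F(t)=2·(ξ·λ₁·e^{−rt}+η·e^{−ρt}) (with ξ,η,r,ρ>0) and K(t,τ)=∫₀^{min(t,τ)} ds/F(s). Then there exists a continuous function x:[0,T]→ℝ satisfying the integral equation x(t) = x₀ + ∫₀ᵀ K(t,τ)·λ₁·e^{−rτ}·w'(x(τ)) dτ for all t∈[0,T]; equivalently, the boundary value problem (d/dt)(F(t)·ẋ(t)) + w'(x(t))·λ₁·e^{−rt} = 0, x(0)=x₀, ẋ(T)=0 has a solution. -/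

import Mathlib

/-!
Writing `p = F ẋ`, the boundary value problem is the system `ẋ = p / F`, `ṗ = -λ₁ e^{-rt} w'(x)`
with `x(0) = x₀` and `p(T) = 0`, and integrating it twice against the Green kernel gives the
integral equation.

If `w'` is replaced by a bounded Lipschitz function `h`, the Picard–Lindelöf flow of the system
depends continuously on the initial momentum `p(0) = c`. Since `ṗ` is bounded, `p(T) - c` stays
in `[-β, β]` for `β = T sup |λ₁ e^{-rt} h|`, so by the intermediate value theorem some
`c ∈ [-β, β]` shoots to `p(T) = 0`.

For `w'` itself take for `h` the difference quotients `(w(y + δ) - w(y)) / δ`: they are Lipschitz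
and bounded by `sup |w'|`, so the corresponding solutions are equi-Lipschitz and Arzelà–Ascoli
gives a uniformly convergent subsequence. By the mean value theorem the difference quotients
converge to `w'` along converging arguments, and dominated convergence passes to the limit in the
integral equation.
-/

/-- `F(t) = 2 (ξ λ₁ e^{-rt} + η e^{-ρt})`. -/
noncomputable def Ffun (ξ lam1 η r ρ : ℝ) (t : ℝ) : ℝ :=
  2 * (ξ * lam1 * Real.exp (-(r * t)) + η * Real.exp (-(ρ * t)))

/-- The Green-function kernel `K(t,τ) = ∫₀^{min(t,τ)} ds / F(s)`. -/
noncomputable def Kker (ξ lam1 η r ρ : ℝ) (t τ : ℝ) : ℝ :=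
  ∫ s in (0:ℝ)..min t τ, 1 / Ffun ξ lam1 η r ρ s

open MeasureTheory intervalIntegral Set Filter Topology NNReal Metric BoundedContinuousFunction

section Slope

variable {w : ℝ → ℝ} {M : ℝ≥0}

lemma norm_slope_le_of_lipschitzWith (hw : LipschitzWith M w) (a b : ℝ) :
    ‖slope w a b‖ ≤ M := by
  rcases eq_or_ne a b with rfl | hab
  · simp
  rw [slope_def_field, Real.norm_eq_abs, abs_div,
    div_le_iff₀ (abs_pos.2 (sub_ne_zero.2 hab.symm))]
  exact hw.dist_le_mul b a

lemma lipschitzWith_slope_add (hw : LipschitzWith M w) {δ : ℝ} (hδ : 0 < δ) :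
    LipschitzWith (2 * M / δ.toNNReal) fun y => slope w y (y + δ) := by
  refine LipschitzWith.of_dist_le_mul fun a b => ?_
  have h₁ := hw.dist_le_mul (a + δ) (b + δ)
  have h₂ := hw.dist_le_mul a b
  simp only [Real.dist_eq, add_sub_add_right_eq_sub] at h₁ h₂
  simp only [Real.dist_eq, slope_def_field, add_sub_cancel_left]
  rw [div_sub_div_same, abs_div, abs_of_pos hδ, div_le_iff₀ hδ, NNReal.coe_div, NNReal.coe_mul,
    Real.coe_toNNReal _ hδ.le]
  calc |w (a + δ) - w a - (w (b + δ) - w b)|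
      ≤ |w (a + δ) - w (b + δ)| + |w a - w b| := by
        rw [sub_sub_sub_comm]; exact abs_sub _ _
    _ ≤ 2 * M / δ * |a - b| * δ := by
        field_simp
        linarith

lemma tendsto_slope_add_of_continuousAt_deriv (hw : Differentiable ℝ w) {y : ℝ}
    (hw' : ContinuousAt (deriv w) y) {u δ : ℕ → ℝ} (hu : Tendsto u atTop (𝓝 y))
    (hδ : ∀ n, 0 < δ n) (hδ0 : Tendsto δ atTop (𝓝 0)) :
    Tendsto (fun n => slope w (u n) (u n + δ n)) atTop (𝓝 (deriv w y)) := by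
  choose ζ hζ hζw using fun n => exists_deriv_eq_slope w (lt_add_of_pos_right (u n) (hδ n))
    hw.continuous.continuousOn hw.differentiableOn
  have hζy : Tendsto ζ atTop (𝓝 y) :=
    tendsto_of_tendsto_of_tendsto_of_le_of_le hu (by simpa using hu.add hδ0)
      (fun n => (hζ n).1.le) (fun n => (hζ n).2.le)
  refine (hw'.tendsto.comp hζy).congr fun n => ?_
  simp [hζw n, slope_def_field]

end Slope

section Prod

variable {𝕜 E F : Type*} [NontriviallyNormedField 𝕜] [NormedAddCommGroup E] [NormedSpace 𝕜 E]
  [NormedAddCommGroup F] [NormedSpace 𝕜 F] {α : 𝕜 → E × F} {v : E × F} {s : Set 𝕜} {t : 𝕜}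

lemma HasDerivWithinAt.fst (h : HasDerivWithinAt α v s t) :
    HasDerivWithinAt (fun t => (α t).1) v.1 s t :=
  (hasFDerivAt_fst (p := α t)).comp_hasDerivWithinAt t h

lemma HasDerivWithinAt.snd (h : HasDerivWithinAt α v s t) :
    HasDerivWithinAt (fun t => (α t).2) v.2 s t :=
  (hasFDerivAt_snd (p := α t)).comp_hasDerivWithinAt t h

end Prod

lemma Continuous.exists_nnreal_bound_Icc {E : Type*} [SeminormedAddCommGroup E] {f : ℝ → E}
    (hf : Continuous f) (a b : ℝ) : ∃ m : ℝ≥0, ∀ t ∈ Icc a b, ‖f t‖ ≤ m := by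
  obtain ⟨C, hC⟩ := (isCompact_Icc (a := a) (b := b)).exists_bound_of_continuousOn hf.continuousOn
  exact ⟨C.toNNReal, fun t ht => (hC t ht).trans (Real.le_coe_toNNReal C)⟩

/-- Clamping `p` to `[-B, B]` makes the field bounded, so that Picard–Lindelöf applies on all of
`[0, T]`; on the solutions used below the clamp is inactive. -/
noncomputable def clampedField (φ γ h : ℝ → ℝ) (B : ℝ) (t : ℝ) (z : ℝ × ℝ) : ℝ × ℝ :=
  (φ t * max (-B) (min z.2 B), -γ t * h z.1)

section Shooting

variable {φ γ h : ℝ → ℝ} {T : ℝ} {m g M L : ℝ≥0}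

lemma lipschitzWith_clampedField (hφ : ∀ t ∈ Icc 0 T, ‖φ t‖ ≤ m)
    (hγ : ∀ t ∈ Icc 0 T, ‖γ t‖ ≤ g) (hh : LipschitzWith L h) (B : ℝ) {t : ℝ}
    (ht : t ∈ Icc 0 T) : LipschitzWith (max m (g * L)) (clampedField φ γ h B t) := by
  have hclamp : LipschitzWith 1 fun z : ℝ × ℝ => max (-B) (min z.2 B) :=
    (LipschitzWith.prod_snd.min_const B).const_max (-B)
  refine LipschitzWith.prodMk ?_ ?_
  · exact ((lipschitzWith_smul (φ t)).comp hclamp).weaken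
      (by rw [mul_one, ← NNReal.coe_le_coe, coe_nnnorm]; exact hφ t ht)
  · refine ((lipschitzWith_smul (-γ t)).comp (hh.comp LipschitzWith.prod_fst)).weaken ?_
    rw [nnnorm_neg, mul_one]
    gcongr
    rw [← NNReal.coe_le_coe, coe_nnnorm]
    exact hγ t ht

lemma norm_clampedField_le (hφ : ∀ t ∈ Icc 0 T, ‖φ t‖ ≤ m)
    (hγ : ∀ t ∈ Icc 0 T, ‖γ t‖ ≤ g) (hM : ∀ y, ‖h y‖ ≤ M) {B : ℝ≥0} {t : ℝ}
    (ht : t ∈ Icc 0 T) (z : ℝ × ℝ) : ‖clampedField φ γ h B t z‖ ≤ m * B + g * M := by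
  have hB : |max (-(B : ℝ)) (min z.2 B)| ≤ B :=
    abs_le.2 ⟨le_max_left _ _, max_le (by simp) (min_le_right _ _)⟩
  refine norm_prod_le_iff.2 ⟨?_, ?_⟩
  · calc ‖φ t * max (-(B : ℝ)) (min z.2 B)‖ ≤ m * B := by
          rw [norm_mul]; exact mul_le_mul (hφ t ht) hB (norm_nonneg _) m.2
      _ ≤ m * B + g * M := le_add_of_nonneg_right (by positivity)
  · calc ‖-γ t * h z.1‖ ≤ g * M := by
          rw [norm_mul, norm_neg]; exact mul_le_mul (hγ t ht) (hM _) (norm_nonneg _) g.2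
      _ ≤ m * B + g * M := le_add_of_nonneg_left (by positivity)

lemma isPicardLindelof_clampedField (hT : 0 ≤ T) (hφc : Continuous φ) (hγc : Continuous γ)
    (hφ : ∀ t ∈ Icc 0 T, ‖φ t‖ ≤ m) (hγ : ∀ t ∈ Icc 0 T, ‖γ t‖ ≤ g)
    (hh : LipschitzWith L h) (hM : ∀ y, ‖h y‖ ≤ M) (z₀ : ℝ × ℝ) (B r : ℝ≥0) :
    IsPicardLindelof (clampedField φ γ h B) (⟨0, left_mem_Icc.2 hT⟩ : Icc 0 T) z₀
      (r + (m * B + g * M) * T.toNNReal) r (m * B + g * M) (max m (g * L)) where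
  lipschitzOnWith t ht := (lipschitzWith_clampedField hφ hγ hh B ht).lipschitzOnWith
  continuousOn z _ := by unfold clampedField; fun_prop
  norm_le t ht z _ := norm_clampedField_le hφ hγ hM ht z
  mul_max_le := by simp [Real.coe_toNNReal _ hT, hT]

theorem exists_bvp_solution_of_lipschitzWith (hT : 0 ≤ T) (hφc : Continuous φ)
    (hγc : Continuous γ) (hh : LipschitzWith L h) (hM : ∀ y, ‖h y‖ ≤ M) (x₀ : ℝ) :
    ∃ x p : ℝ → ℝ, x 0 = x₀ ∧ p T = 0 ∧ ∀ t ∈ Icc 0 T,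
      HasDerivWithinAt x (φ t * p t) (Icc 0 T) t ∧
      HasDerivWithinAt p (-(γ t * h (x t))) (Icc 0 T) t := by
  obtain ⟨m, hφ⟩ := hφc.exists_nnreal_bound_Icc 0 T
  obtain ⟨g, hγ⟩ := hγc.exists_nnreal_bound_Icc 0 T
  set β : ℝ≥0 := g * M * T.toNNReal
  have hβ : (β : ℝ) = g * M * T := by simp [β, hT]
  have hβ₀ : -(β : ℝ) ≤ β := neg_le_self β.coe_nonneg
  obtain ⟨α, hα, L', hαL⟩ := (isPicardLindelof_clampedField hT hφc hγc hφ hγ hh hM (x₀, 0)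
    (2 * β) β).exists_forall_mem_closedBall_eq_hasDerivWithinAt_lipschitzOnWith
  have hmem : ∀ c ∈ Icc (-(β : ℝ)) β, ((x₀, c) : ℝ × ℝ) ∈ closedBall (x₀, 0) β :=
    fun c hc => by simpa [Prod.dist_eq, abs_le] using hc
  have hα₀ : ∀ c ∈ Icc (-(β : ℝ)) β, α (x₀, c) 0 = (x₀, c) := fun c hc => (hα _ (hmem c hc)).1
  have hdrift : ∀ c ∈ Icc (-(β : ℝ)) β, ∀ t ∈ Icc 0 T, |(α (x₀, c) t).2 - c| ≤ β := by
    intro c hc t ht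
    have := norm_image_sub_le_of_norm_deriv_le_segment'
      (fun t ht => ((hα _ (hmem c hc)).2 t ht).snd) (C := g * M) (fun t ht => ?_) t ht
    · rw [hα₀ c hc, Real.norm_eq_abs, sub_zero] at this
      exact this.trans (by rw [hβ]; gcongr; exact ht.2)
    · simp only [clampedField, norm_mul, norm_neg]
      exact mul_le_mul (hγ t (Ico_subset_Icc_self ht)) (hM _) (norm_nonneg _) g.2
  have hshoot : ContinuousOn (fun c => (α (x₀, c) T).2) (Icc (-(β : ℝ)) β) :=
    continuous_snd.comp_continuousOn <| (hαL T ⟨hT, le_rfl⟩).continuousOn.comp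
      (Continuous.prodMk_right x₀).continuousOn hmem
  obtain ⟨c, hc, hcT⟩ : ∃ c ∈ Icc (-(β : ℝ)) β, (α (x₀, c) T).2 = 0 := by
    refine intermediate_value_Icc hβ₀ hshoot ⟨?_, ?_⟩
    · linarith [(abs_le.1 (hdrift _ (left_mem_Icc.2 hβ₀) T ⟨hT, le_rfl⟩)).2]
    · linarith [(abs_le.1 (hdrift _ (right_mem_Icc.2 hβ₀) T ⟨hT, le_rfl⟩)).1]
  refine ⟨fun t => (α (x₀, c) t).1, fun t => (α (x₀, c) t).2, by simp [hα₀ c hc], hcT,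
    fun t ht => ⟨?_, by simpa only [clampedField, neg_mul] using ((hα _ (hmem c hc)).2 t ht).snd⟩⟩
  have hp := abs_le.1 (hdrift c hc t ht)
  have hclamp : max (-((2 * β : ℝ≥0) : ℝ)) (min (α (x₀, c) t).2 ((2 * β : ℝ≥0) : ℝ)) =
      (α (x₀, c) t).2 := by
    push_cast
    rw [min_eq_left (by linarith [hc.2]), max_eq_right (by linarith [hc.1])]
  have hx := ((hα _ (hmem c hc)).2 t ht).fst
  rwa [clampedField, hclamp] at hx

end Shooting

noncomputable def green (φ : ℝ → ℝ) (t τ : ℝ) : ℝ := ∫ s in (0 : ℝ)..min t τ, φ s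

lemma continuous_green {φ : ℝ → ℝ} (hφ : Continuous φ) (t : ℝ) : Continuous (green φ t) :=
  (continuous_primitive (fun a b => hφ.intervalIntegrable a b) 0).comp
    (continuous_const.min continuous_id)

lemma integral_eq_sub_of_hasDerivWithinAt_Icc {f f' : ℝ → ℝ} {a b : ℝ} (hab : a ≤ b)
    (hf : ∀ t ∈ Icc a b, HasDerivWithinAt f (f' t) (Icc a b) t)
    (hint : IntervalIntegrable f' volume a b) : ∫ t in a..b, f' t = f b - f a :=
  integral_eq_sub_of_hasDerivAt_of_le hab (fun t ht => (hf t ht).continuousWithinAt)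
    (fun t ht => (hf t (Ioo_subset_Icc_self ht)).hasDerivAt (Icc_mem_nhds ht.1 ht.2)) hint

section Green

variable {φ u x p : ℝ → ℝ} {T : ℝ}

theorem eq_add_integral_green_mul (hT : 0 ≤ T) (hφ : Continuous φ)
    (hu : ContinuousOn u (Icc 0 T))
    (hx : ∀ t ∈ Icc 0 T, HasDerivWithinAt x (φ t * p t) (Icc 0 T) t)
    (hp : ∀ t ∈ Icc 0 T, HasDerivWithinAt p (-u t) (Icc 0 T) t) (hpT : p T = 0)
    {t : ℝ} (ht : t ∈ Icc 0 T) :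
    x t = x 0 + ∫ τ in (0 : ℝ)..T, green φ t τ * u τ := by
  set G : ℝ → ℝ := fun s => ∫ σ in (0 : ℝ)..s, φ σ
  have hG : ∀ s, HasDerivAt G (φ s) s := fun s => (hφ.integral_hasStrictDerivAt 0 s).hasDerivAt
  have hGc : Continuous G := continuous_iff_continuousAt.2 fun s => (hG s).continuousAt
  have hsub₁ : Icc 0 t ⊆ Icc 0 T := Icc_subset_Icc_right ht.2
  have hsub₂ : Icc t T ⊆ Icc 0 T := Icc_subset_Icc_left ht.1
  have hint : IntervalIntegrable (fun τ => green φ t τ * u τ) volume 0 T :=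
    ((continuous_green hφ t).continuousOn.mul hu).intervalIntegrable_of_Icc hT
  -- on `[0, t]` the kernel is `G τ`, and `G p - x` is a primitive of `-G u`
  have hleft : ∫ τ in (0 : ℝ)..t, green φ t τ * u τ = x t - x 0 - G t * p t := by
    have hΦ := integral_eq_sub_of_hasDerivWithinAt_Icc ht.1 (f := fun s => G s * p s - x s)
      (f' := fun s => -(G s * u s)) (fun s hs => ?_) ?_
    · rw [intervalIntegral.integral_neg] at hΦ
      rw [integral_congr (g := fun τ => G τ * u τ) fun τ hτ => ?_]
      · simp only [G, integral_same, zero_mul] at hΦ ⊢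
        linarith
      · rw [uIcc_of_le ht.1] at hτ
        simp only [green, min_eq_right hτ.2, G]
    · have := ((hG s).hasDerivWithinAt.mul ((hp s (hsub₁ hs)).mono hsub₁)).sub
        ((hx s (hsub₁ hs)).mono hsub₁)
      exact this.congr_deriv (by ring)
    · exact ((hGc.continuousOn.mul (hu.mono hsub₁)).neg).intervalIntegrable_of_Icc ht.1
  -- on `[t, T]` the kernel is the constant `G t`, and `p` is a primitive of `-u`
  have hright : ∫ τ in t..T, green φ t τ * u τ = G t * p t := by
    have hP := integral_eq_sub_of_hasDerivWithinAt_Icc ht.2 (f := p) (f' := fun s => -u s)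
      (fun s hs => (hp s (hsub₂ hs)).mono hsub₂)
      ((hu.mono hsub₂).neg.intervalIntegrable_of_Icc ht.2)
    rw [intervalIntegral.integral_neg, hpT] at hP
    rw [integral_congr (g := fun τ => G t * u τ) fun τ hτ => ?_,
      intervalIntegral.integral_const_mul]
    · rw [show ∫ τ in t..T, u τ = p t by linarith]
    · rw [uIcc_of_le ht.2] at hτ
      simp only [green, min_eq_left hτ.1, G]
  rw [← integral_add_adjacent_intervals (hint.mono_set ?_) (hint.mono_set ?_), hleft, hright]
  · ring
  · rw [uIcc_of_le ht.1, uIcc_of_le hT]; exact hsub₁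
  · rw [uIcc_of_le ht.2, uIcc_of_le hT]; exact hsub₂

theorem lipschitzOnWith_of_bvp {m C : ℝ≥0} (hφ : ∀ t ∈ Icc 0 T, ‖φ t‖ ≤ m)
    (hu : ∀ t ∈ Icc 0 T, ‖u t‖ ≤ C)
    (hx : ∀ t ∈ Icc 0 T, HasDerivWithinAt x (φ t * p t) (Icc 0 T) t)
    (hp : ∀ t ∈ Icc 0 T, HasDerivWithinAt p (-u t) (Icc 0 T) t) (hpT : p T = 0) :
    LipschitzOnWith (m * (C * T.toNNReal)) x (Icc 0 T) := by
  have hpC : LipschitzOnWith C p (Icc 0 T) :=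
    (convex_Icc 0 T).lipschitzOnWith_of_nnnorm_hasDerivWithin_le hp fun t ht => by
      rw [nnnorm_neg, ← NNReal.coe_le_coe, coe_nnnorm]; exact hu t ht
  refine (convex_Icc 0 T).lipschitzOnWith_of_nnnorm_hasDerivWithin_le hx fun t ht => ?_
  have hTmem : T ∈ Icc 0 T := ⟨ht.1.trans ht.2, le_rfl⟩
  have hpt : ‖p t‖ ≤ C * T := by
    have := hpC.dist_le_mul t ht T hTmem
    rw [hpT, dist_zero_right, Real.dist_eq, abs_sub_comm, abs_of_nonneg (by linarith [ht.2])]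
      at this
    exact this.trans (by gcongr; linarith [ht.1])
  rw [← NNReal.coe_le_coe, coe_nnnorm, norm_mul, NNReal.coe_mul, NNReal.coe_mul,
    Real.coe_toNNReal _ hTmem.1]
  exact mul_le_mul (hφ t ht) hpt (norm_nonneg _) m.2

variable {γ : ℝ → ℝ}

theorem exists_uniform_lipschitz_green_solution (hT : 0 ≤ T) (hφ : Continuous φ)
    (hγ : Continuous γ) (M : ℝ≥0) (x₀ : ℝ) :
    ∃ K : ℝ≥0, ∀ (h : ℝ → ℝ) (L : ℝ≥0), LipschitzWith L h → (∀ y, ‖h y‖ ≤ M) →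
      ∃ x : ℝ → ℝ, x 0 = x₀ ∧ LipschitzOnWith K x (Icc 0 T) ∧
        ∀ t ∈ Icc 0 T, x t = x₀ + ∫ τ in (0 : ℝ)..T, green φ t τ * γ τ * h (x τ) := by
  obtain ⟨m, hm⟩ := hφ.exists_nnreal_bound_Icc 0 T
  obtain ⟨g, hg⟩ := hγ.exists_nnreal_bound_Icc 0 T
  refine ⟨m * (g * M * T.toNNReal), fun h L hh hM => ?_⟩
  obtain ⟨x, p, hx0, hpT, hsol⟩ := exists_bvp_solution_of_lipschitzWith hT hφ hγ hh hM x₀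
  have hu : ∀ t ∈ Icc 0 T, ‖γ t * h (x t)‖ ≤ (g * M : ℝ≥0) := fun t ht => by
    rw [norm_mul, NNReal.coe_mul]; exact mul_le_mul (hg t ht) (hM _) (norm_nonneg _) g.2
  have hK := lipschitzOnWith_of_bvp hm hu (fun t ht => (hsol t ht).1)
    (fun t ht => (hsol t ht).2) hpT
  refine ⟨x, hx0, hK, fun t ht => ?_⟩
  rw [eq_add_integral_green_mul hT hφ (hγ.continuousOn.mul
    (hh.continuous.comp_continuousOn hK.continuousOn)) (fun t ht => (hsol t ht).1)
    (fun t ht => (hsol t ht).2) hpT ht, hx0]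
  simp only [Pi.mul_apply, Function.comp_apply, mul_assoc]

end Green

theorem exists_subseq_tendsto_of_lipschitzOnWith {X : Type*} [PseudoMetricSpace X] {S : Set X}
    (hS : IsCompact S) {s : Set ℝ} (hs : IsCompact s) {K : ℝ≥0} {x : ℕ → X → ℝ}
    (hx : ∀ n, LipschitzOnWith K (x n) S) (hxs : ∀ n, MapsTo (x n) S s) :
    ∃ y : X → ℝ, ∃ ψ : ℕ → ℕ, StrictMono ψ ∧ ContinuousOn y S ∧
      ∀ t ∈ S, Tendsto (fun k => x (ψ k) t) atTop (𝓝 (y t)) := by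
  have := isCompact_iff_compactSpace.1 hS
  let f (n : ℕ) : S →ᵇ ℝ :=
    mkOfCompact ⟨S.domRestrict (x n), (hx n).continuousOn.domRestrict⟩
  have hA : IsCompact (closure (range f)) := by
    refine arzela_ascoli s hs _ ?_ ?_
    · rintro _ t ⟨n, rfl⟩
      exact hxs n t.2
    · refine (LipschitzWith.uniformEquicontinuous _ K ?_).equicontinuous
      rintro ⟨_, n, rfl⟩
      exact (hx n).to_restrict
  obtain ⟨F, -, ψ, hψ, hF⟩ := hA.tendsto_subseq fun n => subset_closure (mem_range_self n)
  classical
  refine ⟨fun t => if ht : t ∈ S then F ⟨t, ht⟩ else 0, ψ, hψ, ?_, fun t ht => ?_⟩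
  · rw [continuousOn_iff_continuous_domRestrict]
    convert F.continuous using 1
    ext t
    simp [t.2]
  · simp only [dif_pos ht]
    exact ((continuous_eval_const (⟨t, ht⟩ : S)).tendsto F).comp hF

theorem tendsto_integral_mul_of_tendsto {a b M : ℝ} {k : ℝ → ℝ} (hk : ContinuousOn k (uIcc a b))
    {g : ℕ → ℝ → ℝ} {g' : ℝ → ℝ} (hg : ∀ n, ContinuousOn (g n) (uIcc a b))
    (hgM : ∀ n, ∀ τ ∈ uIcc a b, ‖g n τ‖ ≤ M)
    (hlim : ∀ τ ∈ uIcc a b, Tendsto (fun n => g n τ) atTop (𝓝 (g' τ))) :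
    Tendsto (fun n => ∫ τ in a..b, k τ * g n τ) atTop (𝓝 (∫ τ in a..b, k τ * g' τ)) := by
  refine tendsto_integral_filter_of_dominated_convergence (fun τ => ‖k τ‖ * M)
    (Eventually.of_forall fun n => ((hk.mul (hg n)).mono uIoc_subset_uIcc).aestronglyMeasurable
      measurableSet_uIoc) (Eventually.of_forall fun n => ae_of_all _ fun τ hτ => ?_)
    (hk.norm.mul continuousOn_const).intervalIntegrable
    (ae_of_all _ fun τ hτ => (hlim τ (uIoc_subset_uIcc hτ)).const_mul (k τ))
  rw [norm_mul]
  exact mul_le_mul_of_nonneg_left (hgM n τ (uIoc_subset_uIcc hτ)) (norm_nonneg _)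

theorem exists_green_solution {φ γ w : ℝ → ℝ} {T : ℝ} {M : ℝ≥0} (hT : 0 ≤ T)
    (hφ : Continuous φ) (hγ : Continuous γ) (hw : ContDiff ℝ 1 w) (hM : ∀ y, ‖deriv w y‖ ≤ M)
    (x₀ : ℝ) :
    ∃ x : ℝ → ℝ, ContinuousOn x (Icc 0 T) ∧
      ∀ t ∈ Icc 0 T, x t = x₀ + ∫ τ in (0 : ℝ)..T, green φ t τ * γ τ * deriv w (x τ) := by
  have hwd : Differentiable ℝ w := hw.differentiable one_ne_zero
  have hwM : LipschitzWith M w := lipschitzWith_of_nnnorm_deriv_le hwd fun y => by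
    rw [← NNReal.coe_le_coe, coe_nnnorm]; exact hM y
  obtain ⟨K, hK⟩ := exists_uniform_lipschitz_green_solution hT hφ hγ M x₀
  have hδ (n : ℕ) : (0 : ℝ) < 1 / (n + 1) := Nat.one_div_pos_of_nat
  choose x hx0 hxK hx using fun n => hK _ _ (lipschitzWith_slope_add hwM (hδ n))
    (norm_slope_le_of_lipschitzWith hwM _ <| · + 1 / (n + 1))
  obtain ⟨y, ψ, hψ, hy, hlim⟩ := exists_subseq_tendsto_of_lipschitzOnWith isCompact_Icc
    (isCompact_closedBall x₀ (K * T)) hxK fun n t ht => by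
      have := (hxK n).dist_le_mul t ht 0 ⟨le_rfl, hT⟩
      rw [hx0, dist_zero_right, Real.norm_eq_abs, abs_of_nonneg ht.1] at this
      exact mem_closedBall.2 (this.trans (by gcongr; exact ht.2))
  refine ⟨y, hy, fun t ht => tendsto_nhds_unique (hlim t ht) ?_⟩
  rw [← uIcc_of_le hT] at hxK hlim
  refine (tendsto_const_nhds.add (tendsto_integral_mul_of_tendsto
    ((continuous_green hφ t).mul hγ).continuousOn
    (fun k => (lipschitzWith_slope_add hwM (hδ _)).continuous.comp_continuousOn
      (hxK (ψ k)).continuousOn)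
    (fun k τ _ => norm_slope_le_of_lipschitzWith hwM _ _) fun τ hτ => ?_)).congr
    fun k => (hx (ψ k) t ht).symm
  exact tendsto_slope_add_of_continuousAt_deriv hwd (hw.continuous_deriv le_rfl).continuousAt
    (hlim τ hτ) (fun k => hδ _) (tendsto_one_div_add_atTop_nhds_zero_nat.comp hψ.tendsto_atTop)

theorem exists_solution_integral_equation_general
    (ρ r η ξ lam1 T x₀ : ℝ)
    (hη : 0 < η) (hξ : 0 < ξ)
    (hlam1 : 0 < lam1) (hT : 0 < T)
    (w : ℝ → ℝ) (hw : ContDiff ℝ 1 w)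
    (hw' : ∃ M : ℝ, ∀ x : ℝ, |deriv w x| ≤ M) :
    ∃ x : ℝ → ℝ, ContinuousOn x (Set.Icc (0:ℝ) T) ∧
      ∀ t ∈ Set.Icc (0:ℝ) T,
        x t = x₀ + ∫ τ in (0:ℝ)..T,
          Kker ξ lam1 η r ρ t τ * lam1 * Real.exp (-(r * τ)) * deriv w (x τ) := by
  obtain ⟨M, hM⟩ := hw'
  have hφ : Continuous fun s => 1 / Ffun ξ lam1 η r ρ s :=
    continuous_const.div (by unfold Ffun; fun_prop) fun s => by unfold Ffun; positivity
  obtain ⟨x, hx, hxeq⟩ := exists_green_solution (M := M.toNNReal) hT.le hφ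
    (by fun_prop : Continuous fun τ => lam1 * Real.exp (-(r * τ))) hw
    (fun y => (hM y).trans (Real.le_coe_toNNReal M)) x₀
  refine ⟨x, hx, fun t ht => (hxeq t ht).trans ?_⟩
  simp only [green, Kker, mul_assoc]

/-- Existence of a solution of the integral equation
`x(t) = x₀ + ∫₀ᵀ K(t,τ) λ₁ e^{-rτ} w'(x(τ)) dτ` on `[0,T]` (equivalently, of
the boundary value problem `(F ẋ)' + w'(x) λ₁ e^{-rt} = 0`, `x(0)=x₀`,
`ẋ(T)=0`), for `w` continuously differentiable with bounded derivative. -/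
theorem exists_solution_integral_equation
    (ρ r η ξ lam1 T x₀ : ℝ)
    (hρ : 0 < ρ) (hr : 0 < r) (hη : 0 < η) (hξ : 0 < ξ)
    (hlam1 : 0 < lam1) (hT : 0 < T)
    (w : ℝ → ℝ) (hw : ContDiff ℝ 1 w)
    (hw' : ∃ M : ℝ, ∀ x : ℝ, |deriv w x| ≤ M) :
    ∃ x : ℝ → ℝ, ContinuousOn x (Set.Icc (0:ℝ) T) ∧
      ∀ t ∈ Set.Icc (0:ℝ) T,
        x t = x₀ + ∫ τ in (0:ℝ)..T,
          Kker ξ lam1 η r ρ t τ * lam1 * Real.exp (-(r * τ)) * deriv w (x τ) :=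
  exists_solution_integral_equation_general ρ r η ξ lam1 T x₀ hη hξ hlam1 hT w hw hw'
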